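/- arXiv:1606.08991 — 8 statements merged into one kernel-verified Lean document; each statement's English description precedes it below -/
import Mathlib

section
/- In a gcd-monoid, any two elements admitting a common right multiple admit a right lcm, and any two elements admitting a common left multiple admit a left lcm. -/
namespace MFR

variable {M : Type*} [Monoid M]

/-- `a` left-divides `b`. -/
def LeftDvd (a b : M) : Prop := ∃ x, a * x = b

/-- `a` right-divides `b`. -/
def RightDvd (a b : M) : Prop := ∃ x, x * a = b

/-- `m` is a right lcm of `a` and `b`. -/
def IsRightLcm (a b m : M) : Prop :=
  LeftDvd a m ∧ LeftDvd b m ∧ ∀ m', LeftDvd a m' → LeftDvd b m' → LeftDvd m m'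

/-- `m` is a left lcm of `a` and `b`. -/
def IsLeftLcm (a b m : M) : Prop :=
  RightDvd a m ∧ RightDvd b m ∧ ∀ m', RightDvd a m' → RightDvd b m' → RightDvd m m'

/-- `d` is a left gcd of `a` and `b`. -/
def IsLeftGcd (a b d : M) : Prop :=
  LeftDvd d a ∧ LeftDvd d b ∧ ∀ e, LeftDvd e a → LeftDvd e b → LeftDvd e d

/-- `d` is a right gcd of `a` and `b`. -/
def IsRightGcd (a b d : M) : Prop :=
  RightDvd d a ∧ RightDvd d b ∧ ∀ e, RightDvd e a → RightDvd e b → RightDvd e d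

/-- A gcd-monoid: cancellative, no nontrivial invertible elements,
left and right gcds exist. -/
structure IsGcdMon (M : Type*) [Monoid M] : Prop where
  mul_left_cancel : ∀ a b c : M, a * b = a * c → b = c
  mul_right_cancel : ∀ a b c : M, b * a = c * a → b = c
  unit_eq_one : ∀ a : M, IsUnit a → a = 1
  exists_leftGcd : ∀ a b : M, ∃ d, IsLeftGcd a b d
  exists_rightGcd : ∀ a b : M, ∃ d, IsRightGcd a b d

/-- Proper left divisibility: `a < b`. -/
def PLDvd (a b : M) : Prop := ∃ x, ¬ IsUnit x ∧ a * x = b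

/-- Proper right divisibility. -/
def PRDvd (a b : M) : Prop := ∃ x, ¬ IsUnit x ∧ x * a = b

/-- Noetherian: proper left and right divisibility are well-founded. -/
def Noeth (M : Type*) [Monoid M] : Prop :=
  WellFounded (PLDvd (M := M)) ∧ WellFounded (PRDvd (M := M))

/-- Proper factor relation. -/
def Factor (a b : M) : Prop := ∃ x y, x * a * y = b ∧ (¬ IsUnit x ∨ ¬ IsUnit y)

/-- Atoms: not a product of two non-invertible elements. -/
def Atomic (a : M) : Prop := ¬ IsUnit a ∧ ∀ x y, a = x * y → IsUnit x ∨ IsUnit y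

/-- Existence of a common right multiple. -/
def CommonRightMul (a b : M) : Prop := ∃ m, LeftDvd a m ∧ LeftDvd b m

/-- Existence of a common left multiple. -/
def CommonLeftMul (a b : M) : Prop := ∃ m, RightDvd a m ∧ RightDvd b m

/-- The 3-Ore condition. -/
def ThreeOre (M : Type*) [Monoid M] : Prop :=
  (∀ a b c : M, CommonRightMul a b → CommonRightMul a c → CommonRightMul b c →
    ∃ m, LeftDvd a m ∧ LeftDvd b m ∧ LeftDvd c m) ∧
  (∀ a b c : M, CommonLeftMul a b → CommonLeftMul a c → CommonLeftMul b c →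
    ∃ m, RightDvd a m ∧ RightDvd b m ∧ RightDvd c m)

/-- The product of two multifractions. -/
def fprod : List M → List M → List M
  | [], b => b
  | a, [] => a
  | a, h :: t =>
    if a.length % 2 = 1 then a.dropLast ++ ((a.getLast?.getD 1) * h) :: t
    else a ++ h :: t

/-- The congruence `≃` on multifractions generated by `(1,∅)`, `(a/a,∅)`, `(1/a/a,∅)`. -/
inductive SimEq : List M → List M → Prop
  | one : SimEq [1] []
  | divPos (a : M) : SimEq [a, a] []
  | divNeg (a : M) : SimEq [1, a, a] []
  | refl (a : List M) : SimEq a a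
  | symm {a b} : SimEq a b → SimEq b a
  | trans {a b c} : SimEq a b → SimEq b c → SimEq a c
  | mul {a b c d} : SimEq a b → SimEq c d → SimEq (fprod a c) (fprod b d)

/-- The reduction rule `R_{i,x}` on multifractions (entries indexed from 1):
`Reduce i x a b` means `b = a • R_{i,x}`. -/
def Reduce (i : ℕ) (x : M) (a b : List M) : Prop :=
  (i = 1 ∧ ∃ (a₁ a₂ b₁ b₂ : M) (s : List M),
    a = a₁ :: a₂ :: s ∧ b = b₁ :: b₂ :: s ∧ b₁ * x = a₁ ∧ b₂ * x = a₂) ∨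
  (2 ≤ i ∧ i % 2 = 0 ∧ ∃ (p s : List M) (am ai ap bi bp x' : M),
    p.length = i - 2 ∧
    a = p ++ am :: ai :: ap :: s ∧
    b = p ++ (am * x') :: bi :: bp :: s ∧
    IsRightLcm x ai (x * bi) ∧ x * bi = ai * x' ∧ x * bp = ap) ∨
  (3 ≤ i ∧ i % 2 = 1 ∧ ∃ (p s : List M) (am ai ap bi bp x' : M),
    p.length = i - 2 ∧
    a = p ++ am :: ai :: ap :: s ∧
    b = p ++ (x' * am) :: bi :: bp :: s ∧
    IsLeftLcm x ai (bi * x) ∧ bi * x = x' * ai ∧ bp * x = ap)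

/-- One-step reduction. -/
def Red (a b : List M) : Prop := ∃ i x, x ≠ (1 : M) ∧ Reduce i x a b

/-- Reflexive-transitive closure of one-step reduction. -/
def RedStar : List M → List M → Prop := Relation.ReflTransGen Red

/-- Irreducible multifractions. -/
def RIrred (a : List M) : Prop := ∀ b, ¬ Red a b

/-- Right basic elements: closure of the atoms under right complement. -/
inductive RightBasic : M → Prop
  | atom {a : M} : Atomic a → RightBasic a
  | compl {a b a' : M} : RightBasic a → RightBasic b →
      IsRightLcm a b (b * a') → RightBasic a'

/-- Minimal number of atoms needed to express `a`. -/
noncomputable def atomLen (a : M) : ℕ :=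
  sInf {n | ∃ l : List M, (∀ x ∈ l, Atomic x) ∧ l.length = n ∧ l.prod = a}

open MulOpposite

section Opposite

theorem leftDvd_op_iff {a b : M} : LeftDvd (op a) (op b) ↔ RightDvd a b := by
  simp only [LeftDvd, RightDvd, op_surjective.exists, ← op_mul, op_inj]

theorem rightDvd_op_iff {a b : M} : RightDvd (op a) (op b) ↔ LeftDvd a b := by
  simp only [LeftDvd, RightDvd, op_surjective.exists, ← op_mul, op_inj]

theorem isRightLcm_op_iff {a b m : M} : IsRightLcm (op a) (op b) (op m) ↔ IsLeftLcm a b m := by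
  simp only [IsRightLcm, IsLeftLcm, op_surjective.forall, leftDvd_op_iff]

theorem isLeftGcd_op_iff {a b d : M} : IsLeftGcd (op a) (op b) (op d) ↔ IsRightGcd a b d := by
  simp only [IsLeftGcd, IsRightGcd, op_surjective.forall, leftDvd_op_iff]

theorem isRightGcd_op_iff {a b d : M} : IsRightGcd (op a) (op b) (op d) ↔ IsLeftGcd a b d := by
  simp only [IsLeftGcd, IsRightGcd, op_surjective.forall, rightDvd_op_iff]

theorem commonRightMul_op_iff {a b : M} : CommonRightMul (op a) (op b) ↔ CommonLeftMul a b := by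
  simp only [CommonRightMul, CommonLeftMul, op_surjective.exists, leftDvd_op_iff]

end Opposite

section Lcm

variable [IsCancelMul M]

/-- A common multiple `m'` of `a` and `b` is compared with `a * x' * d` through their left gcd
`g * t = a * x' * d`: then `t` right-divides both `x' * d` and `y' * d`, hence `d`, which forces
`a * x' ≤ g ≤ m'`. -/
theorem isRightLcm_of_isRightGcd (hgcd : ∀ a b : M, ∃ d, IsLeftGcd a b d) {a b x' y' d : M}
    (hxy : a * (x' * d) = b * (y' * d)) (hd : IsRightGcd (x' * d) (y' * d) d) :
    IsRightLcm a b (a * x') := by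
  have hm : a * x' = b * y' := mul_right_cancel (b := d) (by simpa only [mul_assoc] using hxy)
  refine ⟨⟨x', rfl⟩, ⟨y', hm.symm⟩, ?_⟩
  rintro m' ⟨u, rfl⟩ ⟨v, hv⟩
  obtain ⟨g, ⟨t, hgt⟩, ⟨t', ht'⟩, hg⟩ := hgcd (a * (x' * d)) (a * u)
  obtain ⟨u', rfl⟩ := hg a ⟨_, rfl⟩ ⟨u, rfl⟩
  obtain ⟨v', hbv'⟩ := hg b ⟨_, hxy.symm⟩ ⟨v, hv⟩
  have hx : u' * t = x' * d := mul_left_cancel (a := a) (by rw [← mul_assoc, hgt])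
  have hy : v' * t = y' * d := mul_left_cancel (a := b) (by rw [← mul_assoc, hbv', hgt, hxy])
  obtain ⟨e, rfl⟩ := hd.2.2 t ⟨u', hx⟩ ⟨v', hy⟩
  have hge : a * x' * e = a * u' := mul_right_cancel (b := t) (by simp only [mul_assoc, hgt])
  exact ⟨e * t', by rw [← mul_assoc, hge, ht']⟩

theorem exists_isRightLcm (hleft : ∀ a b : M, ∃ d, IsLeftGcd a b d)
    (hright : ∀ a b : M, ∃ d, IsRightGcd a b d) {a b : M} (hab : CommonRightMul a b) :
    ∃ m, IsRightLcm a b m := by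
  obtain ⟨c, ⟨x, rfl⟩, ⟨y, hy⟩⟩ := hab
  obtain ⟨d, hd⟩ := hright x y
  obtain ⟨x', rfl⟩ := hd.1
  obtain ⟨y', rfl⟩ := hd.2.1
  exact ⟨a * x', isRightLcm_of_isRightGcd hleft hy.symm hd⟩

theorem exists_isLeftLcm (hleft : ∀ a b : M, ∃ d, IsLeftGcd a b d)
    (hright : ∀ a b : M, ∃ d, IsRightGcd a b d) {a b : M} (hab : CommonLeftMul a b) :
    ∃ m, IsLeftLcm a b m := by
  have hleft_op : ∀ a b : Mᵐᵒᵖ, ∃ d, IsLeftGcd a b d := by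
    simpa only [op_surjective.forall, op_surjective.exists, isLeftGcd_op_iff] using hright
  have hright_op : ∀ a b : Mᵐᵒᵖ, ∃ d, IsRightGcd a b d := by
    simpa only [op_surjective.forall, op_surjective.exists, isRightGcd_op_iff] using hleft
  obtain ⟨m, hm⟩ := exists_isRightLcm hleft_op hright_op (commonRightMul_op_iff.2 hab)
  exact ⟨m.unop, isRightLcm_op_iff.1 hm⟩

end Lcm

theorem IsGcdMon.isCancelMul (h : IsGcdMon M) : IsCancelMul M where
  mul_left_cancel a _ _ := h.mul_left_cancel a _ _
  mul_right_cancel a _ _ := h.mul_right_cancel a _ _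

/-- In a gcd-monoid, any two elements admitting a common right
multiple admit a right lcm, and any two elements admitting a common left
multiple admit a left lcm. -/
theorem stmt_1 {M : Type*} [Monoid M] (h : IsGcdMon M) :
    (∀ a b : M, CommonRightMul a b → ∃ m, IsRightLcm a b m) ∧
    (∀ a b : M, CommonLeftMul a b → ∃ m, IsLeftLcm a b m) := by
  have := h.isCancelMul
  exact ⟨fun _ _ => exists_isRightLcm h.exists_leftGcd h.exists_rightGcd,
    fun _ _ => exists_isLeftLcm h.exists_leftGcd h.exists_rightGcd⟩

end MFR
end

section
/- For a cancellative monoid M, the proper left divisibility relation (a < b iff ax = b for some non-invertible x) is well-founded if and only if there exists a map λ from M to ordinal numbers such that λ(ab) ≥ λ(a) + λ(b) for all a, b and λ(a) > 0 whenever a is not invertible. -/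
namespace MFR

variable {M : Type*} [Monoid M]

open IsWellFounded in
theorem exists_rel_le_rank_of_lt_rank {α : Type*} {r : α → α → Prop} [IsWellFounded α r]
    {b : α} {d : Ordinal} (hd : d < rank r b) : ∃ c, r c b ∧ d ≤ rank r c := by
  rw [rank_eq, Ordinal.lt_iSup_iff] at hd
  obtain ⟨⟨c, hc⟩, hdc⟩ := hd
  exact ⟨c, hc, Order.lt_succ_iff.mp hdc⟩

theorem PLDvd.mul_left {a b : M} (h : PLDvd a b) (c : M) : PLDvd (c * a) (c * b) := by
  obtain ⟨x, hx, rfl⟩ := h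
  exact ⟨x, hx, mul_assoc c a x⟩

theorem PLDvd.mul_right [IsDedekindFiniteMonoid M] {a c : M} (h : PLDvd c a) (b : M) :
    PLDvd c (a * b) := by
  obtain ⟨x, hx, rfl⟩ := h
  exact ⟨x * b, fun hxb ↦ hx (isUnit_of_mul_isUnit_left hxb), (mul_assoc c x b).symm⟩

theorem one_pLDvd_of_not_isUnit {a : M} (ha : ¬ IsUnit a) : PLDvd 1 a :=
  ⟨a, ha, one_mul a⟩

theorem wellFounded_pLDvd_of_superadditive (lam : M → Ordinal)
    (hadd : ∀ a b : M, lam a + lam b ≤ lam (a * b)) (hpos : ∀ a : M, ¬ IsUnit a → 0 < lam a) :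
    WellFounded (PLDvd (M := M)) := by
  refine Subrelation.wf (r := InvImage (· < ·) lam) ?_ (InvImage.wf lam Ordinal.lt_wf)
  rintro a b ⟨x, hx, rfl⟩
  calc lam a = lam a + 0 := (add_zero _).symm
    _ < lam a + lam x := add_lt_add_right (hpos x hx) (lam a)
    _ ≤ lam (a * x) := hadd a x

section rank

open IsWellFounded

variable [IsWellFounded M PLDvd]

theorem rank_pLDvd_pos {a : M} (ha : ¬ IsUnit a) : 0 < rank PLDvd a :=
  pos_of_gt (rank_lt_of_rel (one_pLDvd_of_not_isUnit ha))

variable [IsDedekindFiniteMonoid M]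

theorem rank_pLDvd_le_rank_mul (a b : M) : rank PLDvd a ≤ rank PLDvd (a * b) := by
  rw [rank_eq]
  exact Ordinal.iSup_le fun ⟨c, hc⟩ ↦ Order.succ_le_of_lt (rank_lt_of_rel (hc.mul_right b))

/-- The rank for proper left divisibility is superadditive: below `rank a + rank b` every
ordinal is `rank a + d` with `d ≤ rank c` for some `c < b`, and `a * c < a * b`. -/
theorem rank_pLDvd_add_le_rank_mul (a b : M) :
    rank PLDvd a + rank PLDvd b ≤ rank PLDvd (a * b) := by
  induction b using IsWellFounded.induction (PLDvd (M := M)) with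
  | ind b ih =>
    rcases eq_or_ne (rank PLDvd b) 0 with hb | hb
    · rw [hb, add_zero]
      exact rank_pLDvd_le_rank_mul a b
    · refine (Ordinal.add_le_iff hb).2 fun d hd ↦ ?_
      obtain ⟨c, hcb, hdc⟩ := exists_rel_le_rank_of_lt_rank hd
      calc rank PLDvd a + d ≤ rank PLDvd a + rank PLDvd c := add_le_add_right hdc _
        _ ≤ rank PLDvd (a * c) := ih c hcb
        _ < rank PLDvd (a * b) := rank_lt_of_rel (hcb.mul_left a)

end rank

theorem stmt_3_general {M : Type u} [Monoid M]
    (hlc : ∀ a b c : M, a * b = a * c → b = c) :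
    WellFounded (PLDvd (M := M)) ↔
      ∃ lam : M → Ordinal.{u}, (∀ a b : M, lam a + lam b ≤ lam (a * b)) ∧
        (∀ a : M, ¬ IsUnit a → 0 < lam a) := by
  have : IsLeftCancelMul M := ⟨hlc⟩
  refine ⟨fun hwf ↦ ?_, fun ⟨lam, hadd, hpos⟩ ↦ wellFounded_pLDvd_of_superadditive lam hadd hpos⟩
  have : IsWellFounded M PLDvd := ⟨hwf⟩
  exact ⟨IsWellFounded.rank PLDvd, rank_pLDvd_add_le_rank_mul, fun _ ↦ rank_pLDvd_pos⟩

/-- proper left divisibility is well-founded iff there is an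
ordinal-valued map `lam` with `lam (a*b) ≥ lam a + lam b` and `lam a > 0` for
non-invertible `a`. -/
theorem stmt_3 {M : Type u} [Monoid M]
    (hlc : ∀ a b c : M, a * b = a * c → b = c)
    (hrc : ∀ a b c : M, b * a = c * a → b = c) :
    WellFounded (PLDvd (M := M)) ↔
      ∃ lam : M → Ordinal.{u}, (∀ a b : M, lam a + lam b ≤ lam (a * b)) ∧
        (∀ a : M, ¬ IsUnit a → 0 < lam a) :=
  stmt_3_general hlc

end MFR
end

section
/- For a cancellative monoid M, the proper factor relation ⊂ (where a ⊂ b iff xay = b holds for some x, y with at least one of x, y not invertible) is well-founded if and only if both the proper left divisibility relation and the proper right divisibility relation on M are well-founded. -/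
namespace MFR

variable {M : Type*} [Monoid M]

section ProperFactor

variable {a b : M}

theorem PLDvd.factor (h : PLDvd a b) : Factor a b := by
  obtain ⟨x, hx, rfl⟩ := h
  exact ⟨1, x, by rw [one_mul], Or.inr hx⟩

theorem PRDvd.factor (h : PRDvd a b) : Factor a b := by
  obtain ⟨x, hx, rfl⟩ := h
  exact ⟨x, 1, by rw [mul_one], Or.inl hx⟩

theorem Factor.units_mul (u : Mˣ) (h : Factor a b) : Factor a (u * b) := by
  obtain ⟨x, y, rfl, hxy⟩ := h
  refine ⟨u * x, y, by simp only [mul_assoc], ?_⟩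
  rwa [Units.isUnit_units_mul]

theorem acc_factor_of_acc_units_mul (u : Mˣ) (h : Acc Factor (u * a)) : Acc Factor a :=
  ⟨a, fun _ hc => h.inv (hc.units_mul u)⟩

/-- The induction runs on `b` for `<~` and, inside, on the left divisor `a` of `b` for `<`.
A proper factor `c` of `a`, with `u * c * v = a`, is handled by the inner hypothesis when `u` is
invertible (then `u * c < a`), and by the outer one otherwise (then `c * (v * y) <~ b`). -/
theorem acc_factor_of_leftDvd (hL : WellFounded (PLDvd (M := M)))
    (hR : WellFounded (PRDvd (M := M))) (b : M) : ∀ a, LeftDvd a b → Acc Factor a := by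
  induction b using hR.induction with
  | _ b ihR =>
  intro a
  induction a using hL.induction with
  | _ a ihL =>
  rintro ⟨y, rfl⟩
  refine ⟨_, fun c ⟨u, v, huv, hnu⟩ => ?_⟩
  subst huv
  by_cases hu : IsUnit u
  · obtain ⟨u, rfl⟩ := hu
    have hv : ¬IsUnit v := hnu.resolve_left (not_not_intro u.isUnit)
    refine acc_factor_of_acc_units_mul u (ihL _ ⟨v, hv, rfl⟩ ⟨v * y, ?_⟩)
    simp only [mul_assoc]
  · exact ihR (c * (v * y)) ⟨u, hu, by simp only [mul_assoc]⟩ c ⟨v * y, rfl⟩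

theorem wellFounded_factor (hL : WellFounded (PLDvd (M := M)))
    (hR : WellFounded (PRDvd (M := M))) : WellFounded (Factor (M := M)) :=
  ⟨fun a => acc_factor_of_leftDvd hL hR a a ⟨1, mul_one a⟩⟩

end ProperFactor

theorem stmt_4_general {M : Type*} [Monoid M] :
    WellFounded (Factor (M := M)) ↔
      (WellFounded (PLDvd (M := M)) ∧ WellFounded (PRDvd (M := M))) :=
  ⟨fun h => ⟨Subrelation.wf PLDvd.factor h, Subrelation.wf PRDvd.factor h⟩,
    fun ⟨hL, hR⟩ => wellFounded_factor hL hR⟩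

/-- the proper factor relation is well-founded iff both proper
left and proper right divisibility are well-founded. -/
theorem stmt_4 {M : Type*} [Monoid M]
    (hlc : ∀ a b c : M, a * b = a * c → b = c)
    (hrc : ∀ a b c : M, b * a = c * a → b = c) :
    WellFounded (Factor (M := M)) ↔
      (WellFounded (PLDvd (M := M)) ∧ WellFounded (PRDvd (M := M))) :=
  stmt_4_general

end MFR
end

section
/- If M is a strongly noetherian gcd-monoid with finite atom set S and (S, R) is a recursive presentation of M, then the word problem for M with respect to S is decidable. -/
/-!
To decide whether a word `V` left-divides a word `U`, reverse subwords: to divide `s v` into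
`t u`, replace the letters `s`, `t` by their right lcm `s a = t b`, divide `b` into `u`, obtaining
a quotient `r`, and then divide `v` into `a r`. Both recursive calls divide into a proper right
divisor of `t u`, so strong noetherianity makes the procedure terminate, and the right-lcm
property makes its failures correct. Only finitely many pairs of atoms occur, so the lcm data is a
finite table that can be hard-wired into a program. Two words are equal in `M` iff each
left-divides the other, because `M` has no nontrivial units.
-/

namespace MFR

variable {M : Type*} [Monoid M]

theorem _root_.ComputablePred.and {α : Type*} [Primcodable α] {p q : α → Prop}
    (hp : ComputablePred p) (hq : ComputablePred q) : ComputablePred fun a => p a ∧ q a := by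
  classical
  exact Computable.computablePred
    ((Primrec.and.to_comp.comp hp.decide hq.decide).of_eq fun a => by simp)

theorem noeth_of_superadditive (lam : M → ℕ) (hlam : ∀ a b : M, lam a + lam b ≤ lam (a * b))
    (hlam1 : ∀ a : M, ¬ IsUnit a → 0 < lam a) : Noeth M := by
  have hlt : ∀ a x : M, ¬ IsUnit x → lam a < lam (a * x) ∧ lam a < lam (x * a) := fun a x hx =>
    ⟨by linarith [hlam a x, hlam1 x hx], by linarith [hlam x a, hlam1 x hx]⟩
  constructor
  · refine Subrelation.wf ?_ (InvImage.wf lam wellFounded_lt)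
    rintro a _ ⟨x, hx, rfl⟩
    exact (hlt a x hx).1
  · refine Subrelation.wf ?_ (InvImage.wf lam wellFounded_lt)
    rintro a _ ⟨x, hx, rfl⟩
    exact (hlt a x hx).2

namespace IsGcdMon

theorem eq_one_of_mul_eq_one (h : IsGcdMon M) {a b : M} (hab : a * b = 1) : a = 1 := by
  have hba : b * a = 1 := h.mul_left_cancel a _ _ (by rw [← mul_assoc, hab, one_mul, mul_one])
  exact h.unit_eq_one a ⟨⟨a, b, hab, hba⟩, rfl⟩

theorem leftDvd_antisymm (h : IsGcdMon M) {a b : M} (hab : LeftDvd a b) (hba : LeftDvd b a) :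
    a = b := by
  obtain ⟨x, rfl⟩ := hab
  obtain ⟨y, hy⟩ := hba
  have hxy : x * y = 1 := h.mul_left_cancel a _ _ (by rw [← mul_assoc, hy, mul_one])
  rw [h.eq_one_of_mul_eq_one hxy, mul_one]

/-- A common right multiple `m` that is minimal for proper left divisibility is a right lcm: its
left gcd with any other common right multiple cannot be a proper left divisor of `m`. -/
theorem exists_isRightLcm (h : IsGcdMon M) (hwf : WellFounded (PLDvd (M := M))) {a b : M}
    (hab : CommonRightMul a b) : ∃ m, IsRightLcm a b m := by
  obtain ⟨m, ⟨ham, hbm⟩, hmin⟩ := hwf.has_min {m | LeftDvd a m ∧ LeftDvd b m} hab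
  refine ⟨m, ham, hbm, fun m' ham' hbm' => ?_⟩
  obtain ⟨d, ⟨x, hx⟩, hdm', hd⟩ := h.exists_leftGcd m m'
  have hx1 : IsUnit x := by
    by_contra hx1
    exact hmin d ⟨hd a ham ham', hd b hbm hbm'⟩ ⟨x, hx1, hx⟩
  rwa [← hx, h.unit_eq_one x hx1, mul_one]

theorem leftDvd_mul_iff_of_isRightLcm (h : IsGcdMon M) {a b m b' : M}
    (hm : IsRightLcm a b m) (hb : b * b' = m) (c : M) : LeftDvd a (b * c) ↔ LeftDvd b' c := by
  constructor
  · intro hac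
    obtain ⟨y, hy⟩ := hm.2.2 (b * c) hac ⟨c, rfl⟩
    rw [← hb, mul_assoc] at hy
    exact ⟨y, h.mul_left_cancel _ _ _ hy⟩
  · rintro ⟨y, rfl⟩
    obtain ⟨x, hx⟩ := hm.1
    exact ⟨x * y, by rw [← mul_assoc, hx, ← hb, mul_assoc]⟩

end IsGcdMon

section Reversing

open FreeMonoid

variable {α : Type*}

/-- A state `(V, U, K)` asks for a word `r` with `V r = U`; each frame `(v, a)` of the stack `K`
then asks for the quotient of `a r` by `v`. -/
abbrev DivState (α : Type*) := List α × List α × List (List α × List α)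

/-- One step of left division by subword reversing; `T s t = some (a, b)` stands for the right lcm
`s a = t b` of the letters `s`, `t`. -/
def divStep (T : α → α → Option (List α × List α)) : DivState α → Option (List α) ⊕ DivState α
  | ([], u, []) => .inl (some u)
  | ([], u, (v, a) :: K) => .inr (v, a ++ u, K)
  | (_ :: _, [], _) => .inl none
  | (s :: v, t :: u, K) =>
    match T s t with
    | none => .inl none
    | some (a, b) => .inr (b, u, (v, a) :: K)

def divFix (T : α → α → Option (List α × List α)) : DivState α →. Option (List α) :=
  PFun.fix fun x => Part.some (divStep T x)

variable (π : FreeMonoid α →* M)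

def IsLcmEntry (s t : α) : Option (List α × List α) → Prop
  | none => ¬ CommonRightMul (π (of s)) (π (of t))
  | some (a, b) => IsRightLcm (π (of s)) (π (of t)) (π (of s * ofList a)) ∧
      π (of s * ofList a) = π (of t * ofList b)

def IsLcmTable (T : α → α → Option (List α × List α)) : Prop :=
  ∀ s t, IsLcmEntry π s t (T s t)

theorem exists_isLcmTable (h : IsGcdMon M) (hwf : WellFounded (PLDvd (M := M)))
    (hπ : Function.Surjective π) : ∃ T, IsLcmTable π T := by
  suffices ∀ s t, ∃ o, IsLcmEntry π s t o by
    choose T hT using this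
    exact ⟨T, hT⟩
  intro s t
  by_cases hst : CommonRightMul (π (of s)) (π (of t))
  · obtain ⟨m, hm⟩ := h.exists_isRightLcm hwf hst
    obtain ⟨x, hx⟩ := hm.1
    obtain ⟨y, hy⟩ := hm.2.1
    obtain ⟨wx, rfl⟩ := hπ x
    obtain ⟨wy, rfl⟩ := hπ y
    exact ⟨some (toList wx, toList wy), by simpa [hx] using hm, by simp [hx, hy]⟩
  · exact ⟨none, hst⟩

/-- The invariant of the correctness proof: the run from `(V, U, K)` either fails where `V` does
not left-divide `U`, or it goes on as if the quotient `r` were handed back to the stack `K`. -/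
def DivOutcome (T : α → α → Option (List α × List α)) (V U : List α)
    (K : List (List α × List α)) : Prop :=
  (¬ LeftDvd (π (ofList V)) (π (ofList U)) ∧ none ∈ divFix T (V, U, K)) ∨
    ∃ r, π (ofList (V ++ r)) = π (ofList U) ∧ divFix T (V, U, K) = divFix T ([], r, K)

variable {π} {T : α → α → Option (List α × List α)}

theorem divFix_eq_of_divStep_eq_inr {x y : DivState α} (hxy : divStep T x = .inr y) :
    divFix T x = divFix T y :=
  PFun.fix_fwd_eq (by simp [hxy])

theorem mem_divFix_of_divStep_eq_inl {x : DivState α} {o : Option (List α)}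
    (hx : divStep T x = .inl o) : o ∈ divFix T x :=
  PFun.fix_stop (by simp [hx])

theorem divOutcome_nil (U : List α) (K : List (List α × List α)) : DivOutcome π T [] U K :=
  .inr ⟨U, rfl, rfl⟩

theorem divOutcome_cons_nil (h : IsGcdMon M) {s : α} (hs : ¬ IsUnit (π (of s))) (v : List α)
    (K : List (List α × List α)) : DivOutcome π T (s :: v) [] K := by
  refine .inl ⟨?_, mem_divFix_of_divStep_eq_inl rfl⟩
  rintro ⟨x, hx⟩
  rw [ofList_cons, map_mul, mul_assoc, ofList_nil, map_one] at hx
  exact hs (h.eq_one_of_mul_eq_one hx ▸ isUnit_one)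

theorem divOutcome_cons_cons_of_eq_none {s t : α} (hst : T s t = none)
    (hT : IsLcmTable π T) (v u : List α) (K : List (List α × List α)) :
    DivOutcome π T (s :: v) (t :: u) K := by
  refine .inl ⟨?_, mem_divFix_of_divStep_eq_inl (by simp [divStep, hst])⟩
  rintro ⟨x, hx⟩
  have hnone := hT s t
  rw [hst] at hnone
  refine hnone ⟨π (ofList (t :: u)), ⟨π (ofList v) * x, ?_⟩, ⟨π (ofList u), ?_⟩⟩
  · rw [← hx, ofList_cons, map_mul, mul_assoc]
  · rw [ofList_cons, map_mul]

theorem divOutcome_cons_cons_of_eq_some (h : IsGcdMon M) (hatom : ∀ s, ¬ IsUnit (π (of s)))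
    {s t : α} {a b : List α} (hst : T s t = some (a, b)) (hT : IsLcmTable π T)
    (v u : List α) (K : List (List α × List α))
    (ih : ∀ U, PRDvd (π (ofList U)) (π (ofList (t :: u))) → ∀ V K, DivOutcome π T V U K) :
    DivOutcome π T (s :: v) (t :: u) K := by
  have hlcm := hT s t
  rw [hst] at hlcm
  obtain ⟨hlcm, hab⟩ := hlcm
  have hdvd_iff := h.leftDvd_mul_iff_of_isRightLcm hlcm (by simpa using hab.symm) (π (ofList u))
  have hfix₁ : divFix T (s :: v, t :: u, K) = divFix T (b, u, (v, a) :: K) :=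
    divFix_eq_of_divStep_eq_inr (by simp [divStep, hst])
  rcases ih u ⟨π (of t), hatom t, by simp⟩ b ((v, a) :: K) with
    ⟨hbu, hnone⟩ | ⟨r₁, hr₁, hfix₂⟩
  · refine .inl ⟨fun ⟨x, hx⟩ => hbu (hdvd_iff.1 ⟨π (ofList v) * x, ?_⟩), hfix₁ ▸ hnone⟩
    simpa [mul_assoc] using hx
  have hfix₃ : divFix T ([], r₁, (v, a) :: K) = divFix T (v, a ++ r₁, K) :=
    divFix_eq_of_divStep_eq_inr rfl
  have hfix := hfix₁.trans (hfix₂.trans hfix₃)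
  have hq : π (of s) * (π (ofList a) * π (ofList r₁)) = π (of t) * π (ofList u) := by
    simp only [map_mul, ofList_append] at hab hr₁
    rw [← mul_assoc, hab, mul_assoc, hr₁]
  rcases ih (a ++ r₁) ⟨π (of s), hatom s, by simpa using hq⟩ v K with
    ⟨hvq, hnone⟩ | ⟨r, hr, hfix₄⟩
  · refine .inl ⟨fun ⟨x, hx⟩ => hvq ⟨x, h.mul_left_cancel (π (of s)) _ _ ?_⟩, hfix ▸ hnone⟩
    simp only [ofList_cons, ofList_append, map_mul, mul_assoc] at hx ⊢
    rw [hx, hq]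
  · refine .inr ⟨r, ?_, hfix.trans hfix₄⟩
    simpa [mul_assoc, hq] using congrArg (π (of s) * ·) hr

theorem divOutcome_of_isLcmTable (h : IsGcdMon M) (hwf : WellFounded (PRDvd (M := M)))
    (hatom : ∀ s, ¬ IsUnit (π (of s))) (hT : IsLcmTable π T) (V U : List α)
    (K : List (List α × List α)) : DivOutcome π T V U K := by
  induction U using (InvImage.wf (fun U => π (ofList U)) hwf).induction generalizing V K with
  | _ U ih =>
  rcases V with _ | ⟨s, v⟩
  · exact divOutcome_nil U K
  rcases U with _ | ⟨t, u⟩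
  · exact divOutcome_cons_nil h (hatom s) v K
  cases hst : T s t with
  | none => exact divOutcome_cons_cons_of_eq_none hst hT v u K
  | some ab => exact divOutcome_cons_cons_of_eq_some h hatom hst hT v u K ih

end Reversing

section Computability

open FreeMonoid

variable {α : Type} [Primcodable α] {T : α → α → Option (List α × List α)}

theorem primrec_divStep (hT : Primrec₂ T) : Primrec (divStep T) := by
  have hpop : Primrec fun x : DivState α =>
      (List.casesOn x.2.2 (.inl (some x.2.1)) fun fr K => .inr (fr.1, fr.2 ++ x.2.1, K) :
        Option (List α) ⊕ DivState α) :=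
    Primrec.list_casesOn (Primrec.snd.comp Primrec.snd)
      (Primrec.sumInl.comp (Primrec.option_some.comp (Primrec.fst.comp Primrec.snd)))
      (Primrec.sumInr.comp ((Primrec.fst.comp (Primrec.fst.comp Primrec.snd)).pair
        ((Primrec.list_append.comp (Primrec.snd.comp (Primrec.fst.comp Primrec.snd))
          (Primrec.fst.comp (Primrec.snd.comp Primrec.fst))).pair
          (Primrec.snd.comp Primrec.snd)))).to₂
  have hlcm : Primrec fun y : (DivState α × (α × List α)) × (α × List α) =>
      (Option.casesOn (T y.1.2.1 y.2.1) (.inl none)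
          fun ab => .inr (ab.2, y.2.2, (y.1.2.2, ab.1) :: y.1.1.2.2) :
        Option (List α) ⊕ DivState α) :=
    Primrec.option_casesOn (hT.comp (Primrec.fst.comp (Primrec.snd.comp Primrec.fst))
        (Primrec.fst.comp Primrec.snd))
      (Primrec.const _)
      (Primrec.sumInr.comp ((Primrec.snd.comp Primrec.snd).pair
        ((Primrec.snd.comp (Primrec.snd.comp Primrec.fst)).pair
          (Primrec.list_cons.comp
            ((Primrec.snd.comp (Primrec.snd.comp (Primrec.fst.comp Primrec.fst))).pair
              (Primrec.fst.comp Primrec.snd))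
            (Primrec.snd.comp (Primrec.snd.comp
              (Primrec.fst.comp (Primrec.fst.comp Primrec.fst)))))))).to₂
  have hcons : Primrec fun z : DivState α × (α × List α) =>
      (List.casesOn z.1.2.1 (.inl none) fun t u =>
        Option.casesOn (T z.2.1 t) (.inl none) fun ab => .inr (ab.2, u, (z.2.2, ab.1) :: z.1.2.2) :
        Option (List α) ⊕ DivState α) :=
    Primrec.list_casesOn (Primrec.fst.comp (Primrec.snd.comp Primrec.fst)) (Primrec.const _)
      hlcm.to₂
  refine (Primrec.list_casesOn Primrec.fst hpop hcons.to₂).of_eq ?_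
  rintro ⟨_ | ⟨s, v⟩, _ | ⟨t, u⟩, _ | ⟨⟨v', a⟩, K⟩⟩ <;> try rfl
  all_goals cases hst : T s t <;> simp [divStep, hst]

theorem partrec_divFix (hT : Primrec₂ T) : Partrec (divFix T) :=
  Partrec.fix (primrec_divStep hT).to_comp.partrec

theorem computablePred_leftDvd {π : FreeMonoid α →* M} (h : IsGcdMon M)
    (hwf : WellFounded (PRDvd (M := M))) (hatom : ∀ s, ¬ IsUnit (π (of s)))
    (hT : IsLcmTable π T) (hTp : Primrec₂ T) :
    ComputablePred fun p : List α × List α => LeftDvd (π (ofList p.1)) (π (ofList p.2)) := by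
  classical
  refine Computable.computablePred <| Partrec.of_eq_tot
    (((partrec_divFix hTp).comp
      (Computable.fst.pair (Computable.snd.pair (Computable.const [])))).map
      (Primrec.option_isSome.to_comp.comp Computable.snd).to₂) fun p => ?_
  rcases divOutcome_of_isLcmTable h hwf hatom hT p.1 p.2 [] with ⟨hnd, hnone⟩ | ⟨r, hr, hfix⟩
  · exact Part.mem_map_iff _ |>.2 ⟨none, hnone, by simp [hnd]⟩
  · refine Part.mem_map_iff _ |>.2 ⟨some r, hfix ▸ mem_divFix_of_divStep_eq_inl rfl, ?_⟩
    simp only [Option.isSome_some, true_eq_decide_iff]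
    exact ⟨π (ofList r), by simpa using hr⟩

end Computability

theorem stmt_6_general {M : Type} [Monoid M] (h : IsGcdMon M)
    (lam : M → ℕ) (hlam : ∀ a b : M, lam a + lam b ≤ lam (a * b))
    (hlam1 : ∀ a : M, ¬ IsUnit a → 0 < lam a)
    (n : ℕ) (π : FreeMonoid (Fin n) →* M)
    (hatoms : ∀ s : Fin n, Atomic (π (FreeMonoid.of s)))
    (hgen : Function.Surjective π) :
    ComputablePred fun p : List (Fin n) × List (Fin n) =>
      π (FreeMonoid.ofList p.1) = π (FreeMonoid.ofList p.2) := by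
  obtain ⟨hwfL, hwfR⟩ := noeth_of_superadditive lam hlam hlam1
  obtain ⟨T, hT⟩ := exists_isLcmTable π h hwfL hgen
  have hdvd := computablePred_leftDvd h hwfR (fun s => (hatoms s).1) hT (Primrec.dom_finite _)
  have hdvd_swap : ComputablePred fun p : List (Fin n) × List (Fin n) =>
      LeftDvd (π (FreeMonoid.ofList p.2)) (π (FreeMonoid.ofList p.1)) :=
    ComputablePred.computable_of_manyOneReducible
      ⟨Prod.swap, Computable.snd.pair Computable.fst, fun _ => Iff.rfl⟩ hdvd
  refine (hdvd.and hdvd_swap).of_eq fun p => ⟨fun ⟨h₁, h₂⟩ => h.leftDvd_antisymm h₁ h₂, ?_⟩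
  intro he
  exact ⟨⟨1, by rw [mul_one, he]⟩, ⟨1, by rw [mul_one, he]⟩⟩

/-- strongly noetherian gcd-monoid, finite atom set, recursive
presentation: the word problem is decidable. -/
theorem stmt_6 {M : Type} [Monoid M] (h : IsGcdMon M)
    (lam : M → ℕ) (hlam : ∀ a b : M, lam a + lam b ≤ lam (a * b))
    (hlam1 : ∀ a : M, ¬ IsUnit a → 0 < lam a)
    (n : ℕ) (π : FreeMonoid (Fin n) →* M)
    (hatoms : ∀ s : Fin n, Atomic (π (FreeMonoid.of s)))
    (hatoms' : ∀ a : M, Atomic a → ∃ s : Fin n, π (FreeMonoid.of s) = a)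
    (hgen : Function.Surjective π)
    (R : List (Fin n) × List (Fin n) → Prop) (hR : ComputablePred R)
    (hpres : ∀ w w' : FreeMonoid (Fin n),
      π w = π w' ↔
        conGen (fun u v : FreeMonoid (Fin n) =>
          R (FreeMonoid.toList u, FreeMonoid.toList v)) w w') :
    ComputablePred fun p : List (Fin n) × List (Fin n) =>
      π (FreeMonoid.ofList p.1) = π (FreeMonoid.ofList p.2) :=
  stmt_6_general h lam hlam hlam1 n π hatoms hgen

end MFR
end

section
/- If M is a gcd-monoid and the multifraction b is obtained from a by a reduction rule R_{i,x}, then a ≃ b, i.e., a and b represent the same element of the enveloping group U(M). -/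
namespace MFR

variable {M : Type*} [Monoid M]

/-
Each reduction rule rewrites only a window of two or three consecutive entries, and read in a
group these windows are equal by the defining equation `x * bᵢ = aᵢ * x'` (or its mirror image):
for instance `aᵢ⁻¹ x = x' bᵢ⁻¹`. Such a window identity is derived from the three generating
relations, and then transported to the whole multifraction by multiplying on both sides: `fprod`
is plain concatenation when the left factor has even length, or when it has odd length and the
right factor starts with `1`.
-/

theorem fprod_of_length_even {p : List M} (hp : p.length % 2 = 0) (r : List M) :
    fprod p r = p ++ r := by
  match p, r with
  | [], _ => rfl
  | _ :: _, [] => simp [fprod]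
  | c :: q, _ :: _ => rw [fprod.eq_3 _ _ _ (List.cons_ne_nil c q), if_neg (by omega)]

theorem fprod_one_cons_of_length_odd {p : List M} (hp : p.length % 2 = 1) (r : List M) :
    fprod p (1 :: r) = p ++ r := by
  match p with
  | c :: q =>
    have hne := List.cons_ne_nil c q
    rw [fprod.eq_3 _ _ _ hne, if_pos hp, mul_one, List.getLast?_eq_some_getLast hne,
      Option.getD_some]
    conv_rhs => rw [← List.dropLast_append_getLast hne]
    simp

namespace SimEq

variable {p s u v : List M}

theorem append_left_of_length_even (hp : p.length % 2 = 0) (h : SimEq u v) :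
    SimEq (p ++ u) (p ++ v) := by
  simpa only [fprod_of_length_even hp] using mul (refl p) h

theorem append_left_of_length_odd (hp : p.length % 2 = 1) (h : SimEq (1 :: u) (1 :: v)) :
    SimEq (p ++ u) (p ++ v) := by
  simpa only [fprod_one_cons_of_length_odd hp] using mul (refl p) h

theorem append_right_of_length_even (hu : u.length % 2 = 0) (hv : v.length % 2 = 0)
    (h : SimEq u v) : SimEq (u ++ s) (v ++ s) := by
  simpa only [fprod_of_length_even hu, fprod_of_length_even hv] using mul h (refl s)

theorem append_right_of_length_odd (hu : u.length % 2 = 1) (hv : v.length % 2 = 1)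
    (h : SimEq u v) : SimEq (u ++ s) (v ++ s) := by
  simpa only [fprod_one_cons_of_length_odd hu, fprod_one_cons_of_length_odd hv]
    using mul h (refl (1 :: s))

end SimEq

theorem simEq_self_mul (b x : M) : SimEq [x, b * x] [1, b] := by
  have h₁ : SimEq [1, b, b * x, b * x] [x, b * x] := by
    simpa [fprod] using SimEq.mul (SimEq.divNeg b) (SimEq.refl [x, b * x])
  have h₂ : SimEq [1, b, b * x, b * x] [1, b] := by
    simpa [fprod] using SimEq.mul (SimEq.refl [1, b]) (SimEq.divPos (b * x))
  exact h₁.symm.trans h₂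

theorem simEq_mul_right_mul_right (b₁ b₂ x : M) : SimEq [b₁ * x, b₂ * x] [b₁, b₂] := by
  simpa [fprod] using SimEq.mul (SimEq.refl [b₁]) (simEq_self_mul b₂ x)

theorem simEq_one_cons_mul (b x : M) : SimEq [1, b * x] [1, x, 1, b] := by
  have h₁ : SimEq [1, x, x, b * x] [1, b * x] := by
    simpa [fprod] using SimEq.mul (SimEq.divNeg x) (SimEq.refl [1, b * x])
  have h₂ : SimEq [1, x, x, b * x] [1, x, 1, b] := by
    simpa [fprod] using SimEq.mul (SimEq.refl [1, x]) (simEq_self_mul b x)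
  exact h₁.symm.trans h₂

theorem leftFrac_simEq_rightFrac {y z y' z' : M} (h : z * y' = y * z') :
    SimEq [1, y, z] [z', y'] := by
  have h₁ : SimEq [1, y, z * y', y'] [1, y, z] := by
    simpa [fprod] using SimEq.mul (SimEq.refl [1, y, z]) (SimEq.divPos y')
  have h₂ : SimEq [1, y, y * z', y'] [z', y'] := by
    simpa [fprod] using SimEq.mul (SimEq.divNeg y) (SimEq.refl [z', y'])
  rw [h] at h₁
  exact h₁.symm.trans h₂

theorem rightFrac_simEq_leftFrac {y z y' z' : M} (h : y' * z = z' * y) :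
    SimEq [y, z] [1, z', y'] := by
  have h₁ : SimEq [1, z', y' * z, z] [1, z', y'] := by
    simpa [fprod] using SimEq.mul (SimEq.refl [1, z', y']) (SimEq.divPos z)
  have h₂ : SimEq [1, z', z' * y, z] [y, z] := by
    simpa [fprod] using SimEq.mul (SimEq.divNeg z') (SimEq.refl [y, z])
  rw [h] at h₁
  exact h₂.symm.trans h₁

theorem reduce_even_window_simEq {x ai bi x' : M} (h : x * bi = ai * x') (am bp : M) :
    SimEq [am, ai, x * bp] [am * x', bi, bp] := by
  simpa [fprod] using
    SimEq.mul (SimEq.mul (SimEq.refl [am]) (leftFrac_simEq_rightFrac h)) (SimEq.refl [bp])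

theorem reduce_odd_window_simEq {x ai bi x' : M} (h : bi * x = x' * ai) (am bp : M) :
    SimEq [1, am, ai, bp * x] [1, x' * am, bi, bp] := by
  have h₁ : SimEq [1, am, ai, bp * x] [1, am, ai, x, 1, bp] := by
    simpa [fprod] using SimEq.mul (SimEq.refl [1, am, ai]) (simEq_one_cons_mul bp x)
  have h₂ : SimEq [1, am, ai, x, 1, bp] [1, am, 1, x', bi, bp] := by
    simpa [fprod] using
      SimEq.mul (SimEq.mul (SimEq.refl [1, am]) (rightFrac_simEq_leftFrac h)) (SimEq.refl [1, bp])
  have h₃ : SimEq [1, am, 1, x', bi, bp] [1, x' * am, bi, bp] := by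
    simpa [fprod] using SimEq.mul (simEq_one_cons_mul x' am).symm (SimEq.refl [bi, bp])
  exact h₁.trans (h₂.trans h₃)

theorem stmt_9_general {M : Type*} [Monoid M] {i : ℕ} {x : M}
    {a b : List M} (hr : Reduce i x a b) : SimEq a b := by
  rcases hr with ⟨-, a₁, a₂, b₁, b₂, s, rfl, rfl, rfl, rfl⟩ |
    ⟨-, hi, p, s, am, ai, ap, bi, bp, x', hp, rfl, rfl, -, hx, rfl⟩ |
    ⟨hi₃, hi, p, s, am, ai, ap, bi, bp, x', hp, rfl, rfl, -, hx, rfl⟩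
  · exact SimEq.append_right_of_length_even (by simp) (by simp)
      (simEq_mul_right_mul_right b₁ b₂ x)
  · simpa using SimEq.append_left_of_length_even (p := p) (by omega) <|
      SimEq.append_right_of_length_odd (s := s) (by simp) (by simp)
        (reduce_even_window_simEq hx am bp)
  · simpa using SimEq.append_left_of_length_odd (p := p) (by omega) <|
      SimEq.append_right_of_length_even (s := s) (by simp) (by simp)
        (reduce_odd_window_simEq hx am bp)

/-- reduction is compatible with the congruence `≃`. -/
theorem stmt_9 {M : Type*} [Monoid M] (h : IsGcdMon M) {i : ℕ} {x : M}
    {a b : List M} (hr : Reduce i x a b) : SimEq a b :=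
  stmt_9_general hr

end MFR
end

section
/- If M is a gcd-monoid, the reflexive-transitive closure ⇒* of the one-step reduction relation on multifractions is compatible with the multifraction product: a ⇒* b implies c·a ⇒* c·b and a·c ⇒* b·c for every multifraction c. -/
/-! Each rule `R_{i,x}` only changes a window of consecutive entries. Multiplying on the left
by `c` shifts the window by an even number of places (the last entry of `c` merges into the first
entry, which is at worst the entry `a_{i-1}` of an even rule, multiplied on the right by `x'`),
and turns `R_{1,x}` into an odd rule with `x' = 1`. Multiplying on the right only changes the last
entry, which lies outside the window unless it is the entry `a_{i+1}` of an even rule; that entry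
stays left-divisible by `x`. -/

namespace MFR

variable {M : Type*} [Monoid M]

/-- `Reduce i x` with the index forgotten: in the two window rules `i = p.length + 2`, so the
parity of the prefix `p` selects the rule. -/
inductive RedStep (x : M) : List M → List M → Prop
  | one {a₁ a₂ b₁ b₂ : M} (s : List M) :
      b₁ * x = a₁ → b₂ * x = a₂ → RedStep x (a₁ :: a₂ :: s) (b₁ :: b₂ :: s)
  | even {p : List M} (s : List M) {am ai ap bi bp x' : M} : p.length % 2 = 0 →
      IsRightLcm x ai (x * bi) → x * bi = ai * x' → x * bp = ap →
      RedStep x (p ++ am :: ai :: ap :: s) (p ++ (am * x') :: bi :: bp :: s)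
  | odd {p : List M} (s : List M) {am ai ap bi bp x' : M} : p.length % 2 = 1 →
      IsLeftLcm x ai (bi * x) → bi * x = x' * ai → bp * x = ap →
      RedStep x (p ++ am :: ai :: ap :: s) (p ++ (x' * am) :: bi :: bp :: s)

theorem red_iff_exists_redStep {a b : List M} : Red a b ↔ ∃ x ≠ 1, RedStep x a b := by
  constructor
  · rintro ⟨i, x, hx, ⟨-, a₁, a₂, b₁, b₂, s, rfl, rfl, h₁, h₂⟩ |
      ⟨hi, hpar, p, s, am, ai, ap, bi, bp, x', hp, rfl, rfl, hlcm, hx', hbp⟩ |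
      ⟨hi, hpar, p, s, am, ai, ap, bi, bp, x', hp, rfl, rfl, hlcm, hx', hbp⟩⟩
    · exact ⟨x, hx, .one s h₁ h₂⟩
    · exact ⟨x, hx, .even s (by omega) hlcm hx' hbp⟩
    · exact ⟨x, hx, .odd s (by omega) hlcm hx' hbp⟩
  · rintro ⟨x, hx, @⟨a₁, a₂, b₁, b₂, s, h₁, h₂⟩ |
      @⟨p, s, am, ai, ap, bi, bp, x', hp, hlcm, hx', hbp⟩ |
      @⟨p, s, am, ai, ap, bi, bp, x', hp, hlcm, hx', hbp⟩⟩
    · exact ⟨1, x, hx, .inl ⟨rfl, a₁, a₂, b₁, b₂, s, rfl, rfl, h₁, h₂⟩⟩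
    · exact ⟨p.length + 2, x, hx, .inr <| .inl ⟨by omega, by omega, p, s, am, ai, ap, bi, bp, x',
        by simp, rfl, rfl, hlcm, hx', hbp⟩⟩
    · exact ⟨p.length + 2, x, hx, .inr <| .inr ⟨by omega, by omega, p, s, am, ai, ap, bi, bp, x',
        by simp, rfl, rfl, hlcm, hx', hbp⟩⟩

theorem fprod_nil_right (a : List M) : fprod a [] = a := by
  cases a <;> rfl

theorem fprod_cons {a : List M} (ha : a ≠ []) (u : M) (c : List M) :
    fprod a (u :: c) =
      if a.length % 2 = 1 then a.dropLast ++ (a.getLast?.getD 1 * u) :: c else a ++ u :: c := by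
  cases a
  · contradiction
  · rfl

theorem fprod_of_length_even_s10 {a : List M} (ha : a.length % 2 = 0) (c : List M) :
    fprod a c = a ++ c := by
  rcases c with _ | ⟨u, c⟩
  · rw [fprod_nil_right, List.append_nil]
  rcases eq_or_ne a [] with rfl | hne
  · rfl
  · rw [fprod_cons hne, if_neg (by omega)]

theorem fprod_concat_cons {a : List M} {v : M} (ha : (a ++ [v]).length % 2 = 1) (u : M)
    (c : List M) : fprod (a ++ [v]) (u :: c) = a ++ (v * u) :: c := by
  rw [fprod_cons (by simp), if_pos ha, List.dropLast_concat, List.getLast?_concat]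
  rfl

theorem exists_fprod_cons_eq (c : List M) :
    ∃ Q u, Q.length % 2 = 0 ∧ ∀ v a, fprod c (v :: a) = Q ++ (u * v) :: a := by
  rcases c.eq_nil_or_concat' with rfl | ⟨c', w, rfl⟩
  · exact ⟨[], 1, rfl, fun v a => by simp [fprod]⟩
  by_cases hc : (c' ++ [w]).length % 2 = 1
  · exact ⟨c', w, by simp at hc; omega, fun v a => fprod_concat_cons hc v a⟩
  · exact ⟨c' ++ [w], 1, by omega, fun v a => by rw [fprod_of_length_even_s10 (by omega), one_mul]⟩

theorem exists_fprod_append_eq (c s : List M) (n : ℕ) (hs : s ≠ [] ∨ n % 2 = 0) :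
    ∃ s', ∀ q : List M, q.length = n → fprod (q ++ s) c = q ++ s' := by
  cases c with
  | nil => exact ⟨s, fun q _ => fprod_nil_right _⟩
  | cons u c =>
    by_cases hpar : (n + s.length) % 2 = 0
    · refine ⟨s ++ u :: c, fun q hq => ?_⟩
      rw [fprod_of_length_even_s10 (by simp [hq, hpar]), List.append_assoc]
    obtain ⟨s₀, w, rfl⟩ : ∃ s₀ w, s = s₀ ++ [w] := by
      rcases s.eq_nil_or_concat' with rfl | hs'
      · simp at hs hpar; omega
      · exact hs'
    refine ⟨s₀ ++ (w * u) :: c, fun q hq => ?_⟩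
    rw [← List.append_assoc, fprod_concat_cons (by simp at hpar ⊢; omega), List.append_assoc]

namespace RedStep

variable {x : M}

theorem one_append {q : List M} (hq : q.length % 2 = 0) {a₁ a₂ b₁ b₂ : M} (s : List M)
    (h₁ : b₁ * x = a₁) (h₂ : b₂ * x = a₂) :
    RedStep x (q ++ a₁ :: a₂ :: s) (q ++ b₁ :: b₂ :: s) := by
  rcases q.eq_nil_or_concat' with rfl | ⟨p, am, rfl⟩
  · exact .one s h₁ h₂
  have hlcm : IsLeftLcm x a₁ (b₁ * x) := by
    rw [h₁]
    exact ⟨⟨b₁, h₁⟩, ⟨1, one_mul a₁⟩, fun _ _ h => h⟩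
  simpa using RedStep.odd (p := p) (am := am) (x' := 1) s (by simp at hq; omega) hlcm
    (by rw [one_mul, h₁]) h₂

theorem fprod_left {a b : List M} (h : RedStep x a b) (c : List M) :
    RedStep x (fprod c a) (fprod c b) := by
  obtain ⟨Q, u, hQ, hc⟩ := exists_fprod_cons_eq c
  cases h with
  | one s h₁ h₂ =>
    rw [hc, hc]
    exact one_append hQ s (by rw [mul_assoc, h₁]) h₂
  | @even p s am ai ap bi bp x' hp hlcm hx' hbp =>
    cases p with
    | nil => simpa [hc, mul_assoc] using RedStep.even (p := Q) (am := u * am) s hQ hlcm hx' hbp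
    | cons p₀ p =>
      simpa [hc] using RedStep.even (p := Q ++ (u * p₀) :: p) (am := am) s
        (by simp at hp ⊢; omega) hlcm hx' hbp
  | @odd p s am ai ap bi bp x' hp hlcm hx' hbp =>
    cases p with
    | nil => simp at hp
    | cons p₀ p =>
      simpa [hc] using RedStep.odd (p := Q ++ (u * p₀) :: p) (am := am) s
        (by simp at hp ⊢; omega) hlcm hx' hbp

theorem fprod_append_right {q q' s : List M} (hq : q.length = q'.length)
    (hs : s ≠ [] ∨ q.length % 2 = 0) (H : ∀ s, RedStep x (q ++ s) (q' ++ s)) (c : List M) :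
    RedStep x (fprod (q ++ s) c) (fprod (q' ++ s) c) := by
  obtain ⟨s', hs'⟩ := exists_fprod_append_eq c s q.length hs
  rw [hs' q rfl, hs' q' hq.symm]
  exact H s'

theorem fprod_right {a b : List M} (h : RedStep x a b) (c : List M) :
    RedStep x (fprod a c) (fprod b c) := by
  cases h with
  | @one a₁ a₂ b₁ b₂ s h₁ h₂ =>
    exact fprod_append_right (q := [a₁, a₂]) (q' := [b₁, b₂]) rfl (.inr (by simp))
      (fun s => .one s h₁ h₂) c
  | @even p s am ai ap bi bp x' hp hlcm hx' hbp =>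
    rcases eq_or_ne s [] with rfl | hs
    · rcases c with _ | ⟨u, c⟩
      · simpa only [fprod_nil_right] using RedStep.even [] hp hlcm hx' hbp
      have key := fprod_concat_cons (a := p ++ [am, ai]) (v := ap) (by simp; omega) u c
      have key' := fprod_concat_cons (a := p ++ [am * x', bi]) (v := bp) (by simp; omega) u c
      simp only [List.append_assoc, List.cons_append, List.nil_append] at key key'
      rw [key, key']
      simpa using RedStep.even c hp hlcm hx' (by rw [← mul_assoc, hbp])
    · simpa using fprod_append_right (q := p ++ [am, ai, ap]) (q' := p ++ [am * x', bi, bp])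
        (by simp) (.inl hs) (fun s => by simpa using RedStep.even s hp hlcm hx' hbp) c
  | @odd p s am ai ap bi bp x' hp hlcm hx' hbp =>
    simpa using fprod_append_right (q := p ++ [am, ai, ap]) (q' := p ++ [x' * am, bi, bp])
      (by simp) (.inr (by simp; omega)) (fun s => by simpa using RedStep.odd s hp hlcm hx' hbp) c

end RedStep

theorem RedStar.map_of_redStep {f : List M → List M}
    (hf : ∀ {x : M} {a b : List M}, RedStep x a b → RedStep x (f a) (f b)) {a b : List M}
    (hab : RedStar a b) : RedStar (f a) (f b) :=
  hab.lift f fun _ _ h => by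
    obtain ⟨x, hx, h⟩ := red_iff_exists_redStep.1 h
    exact red_iff_exists_redStep.2 ⟨x, hx, hf h⟩

theorem stmt_10_general {M : Type*} [Monoid M] {a b : List M}
    (hab : RedStar a b) (c : List M) :
    RedStar (fprod c a) (fprod c b) ∧ RedStar (fprod a c) (fprod b c) :=
  ⟨hab.map_of_redStep (·.fprod_left c), hab.map_of_redStep (·.fprod_right c)⟩

/-- `⇒*` is compatible with the multifraction product. -/
theorem stmt_10 {M : Type*} [Monoid M] (h : IsGcdMon M) {a b : List M}
    (hab : RedStar a b) (c : List M) :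
    RedStar (fprod c a) (fprod c b) ∧ RedStar (fprod a c) (fprod b c) :=
  stmt_10_general hab c

end MFR
end

section
/- If M is a noetherian gcd-monoid, the reduction rewrite system R_M on multifractions is terminating: there is no infinite sequence a⁰ ⇒ a¹ ⇒ a² ⇒ ⋯ of one-step reductions. -/
namespace MFR

variable {M : Type*} [Monoid M]

/-!
Every one-step reduction `R_{i,x}` with `x ≠ 1` leaves all entries after some position `k`
unchanged and replaces the `k`-th entry by a proper factor of it (`k = 2` for `i = 1`, and
`k = i + 1` otherwise). Hence reduction strictly decreases a multifraction in the
anti-lexicographic extension of the proper-factor ordering to tuples of fixed length. That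
ordering is well-founded because the proper-factor ordering is, which in turn follows from the
well-foundedness of proper left and right divisibility.
-/

/-- Induction on `x` along proper right divisibility, then on `y` along proper left
divisibility: a proper factor `z` of `y = u * z * v` is either a proper left divisor of `y`
(when `u = 1`), or a left divisor of the proper right divisor `z * v * w` of `x = y * w`. -/
theorem acc_factor_of_leftDvd_s11 (hu : ∀ a : M, IsUnit a → a = 1) (hn : Noeth M) (x : M) :
    ∀ y, LeftDvd y x → Acc Factor y := by
  induction x using hn.2.induction with
  | _ x ihx =>
  intro y hyx
  induction y using hn.1.induction with
  | _ y ihy =>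
  obtain ⟨w, rfl⟩ := hyx
  refine ⟨_, fun z ⟨u, v, hzy, hne⟩ => ?_⟩
  by_cases hunit : IsUnit u
  · rw [hu u hunit, one_mul] at hzy
    have hv : ¬IsUnit v := hne.resolve_left (not_not.2 hunit)
    exact ihy z ⟨v, hv, hzy⟩ ⟨v * w, by rw [← mul_assoc, hzy]⟩
  · refine ihx (z * (v * w)) ⟨u, hunit, ?_⟩ z ⟨v * w, rfl⟩
    rw [← hzy, mul_assoc, mul_assoc]

theorem wellFounded_factor_s11 (hu : ∀ a : M, IsUnit a → a = 1) (hn : Noeth M) :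
    WellFounded (Factor (M := M)) :=
  ⟨fun x => acc_factor_of_leftDvd_s11 hu hn x x ⟨1, mul_one x⟩⟩

theorem List.piLex_getD_append_cons {α : Type*} {r : α → α → Prop} {u v t : List α} {x y d : α}
    {n : ℕ} (hlen : u.length = v.length) (hn : u.length < n) (hyx : r y x) :
    Pi.Lex (· > ·) (fun {_} => r) (fun i : Fin n => (v ++ y :: t).getD i d)
      (fun i : Fin n => (u ++ x :: t).getD i d) := by
  refine ⟨⟨u.length, hn⟩, fun j hj => ?_, ?_⟩
  · have hj : u.length < (j : ℕ) := hj
    dsimp only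
    rw [List.getD_append_right _ _ _ _ (hlen ▸ hj.le), List.getD_append_right _ _ _ _ hj.le, hlen]
    obtain ⟨k, hk⟩ : ∃ k, (j : ℕ) - v.length = k + 1 := ⟨j - v.length - 1, by omega⟩
    rw [hk, List.getD_cons_succ, List.getD_cons_succ]
  · simpa [List.getD_append_right, hlen] using hyx

theorem Red.exists_eq_append_cons (hu : ∀ a : M, IsUnit a → a = 1) {a b : List M}
    (h : Red a b) : ∃ (u v t : List M) (x y : M),
      a = u ++ x :: t ∧ b = v ++ y :: t ∧ u.length = v.length ∧ Factor y x := by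
  obtain ⟨i, z, hz, hred⟩ := h
  have hz' : ¬IsUnit z := fun hzu => hz (hu z hzu)
  rcases hred with ⟨-, a₁, a₂, b₁, b₂, s, ha, hb, -, h₂⟩ |
    ⟨-, -, p, s, am, ai, ap, bi, bp, x', -, ha, hb, -, -, hx⟩ |
    ⟨-, -, p, s, am, ai, ap, bi, bp, x', -, ha, hb, -, -, hx⟩
  · exact ⟨[a₁], [b₁], s, a₂, b₂, ha, hb, rfl, 1, z, by simpa using h₂, Or.inr hz'⟩
  · exact ⟨p ++ [am, ai], p ++ [am * x', bi], s, ap, bp, by simp [ha], by simp [hb],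
      by simp, z, 1, by simpa using hx, Or.inl hz'⟩
  · exact ⟨p ++ [am, ai], p ++ [x' * am, bi], s, ap, bp, by simp [ha], by simp [hb],
      by simp, 1, z, by simpa using hx, Or.inr hz'⟩

theorem Red.length_eq (hu : ∀ a : M, IsUnit a → a = 1) {a b : List M} (h : Red a b) :
    b.length = a.length := by
  obtain ⟨u, v, t, x, y, rfl, rfl, hlen, -⟩ := h.exists_eq_append_cons hu
  simp [hlen]

theorem Red.piLex_factor (hu : ∀ a : M, IsUnit a → a = 1) {a b : List M} (h : Red a b)
    {n : ℕ} (hn : a.length = n) :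
    Pi.Lex (· > ·) (fun {_} => Factor) (fun i : Fin n => b.getD i 1)
      (fun i : Fin n => a.getD i 1) := by
  obtain ⟨u, v, t, x, y, rfl, rfl, hlen, hyx⟩ := h.exists_eq_append_cons hu
  exact List.piLex_getD_append_cons hlen (by simp [← hn]) hyx

/-- over a noetherian gcd-monoid, reduction is terminating. -/
theorem stmt_11 {M : Type*} [Monoid M] (h : IsGcdMon M) (hn : Noeth M)
    (f : ℕ → List M) : ¬ (∀ n : ℕ, Red (f n) (f (n + 1))) := by
  intro hf
  have hu : ∀ a : M, IsUnit a → a = 1 := h.unit_eq_one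
  have hlen : ∀ k, (f k).length = (f 0).length := by
    intro k
    induction k with
    | zero => rfl
    | succ k ih => rw [(hf k).length_eq hu, ih]
  have hwf : WellFounded (Pi.Lex (· > ·) (fun {_} => Factor) :
      (Fin (f 0).length → M) → (Fin (f 0).length → M) → Prop) :=
    Pi.Lex.wellFounded _ fun _ => wellFounded_factor_s11 hu hn
  exact (wellFounded_iff_isEmpty_descending_chain.1 hwf).false
    ⟨fun k i => (f k).getD i 1, fun k => (hf k).piLex_factor hu (hlen k)⟩

end MFR
end

section
/- Same-level confluence: if a • R_{i,x} and a • R_{i,y} are defined, i is negative in a, and a_i, x, y admit a common right multiple, then a • R_{i,x}R_{i,v} and a • R_{i,y}R_{i,w} are defined and equal, where v, w are given by x ∨ y = xv = yw. -/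
namespace MFR

variable {M : Type*} [Monoid M]

/-!
Right complements compose: if `x ∨ a = x * b` and `v ∨ b = v * d`, then
`(x * v) ∨ a = x * v * d`. Here `x * v = y * w = x ∨ y` and `x ∨ y ∨ aᵢ` exists, so composing
through `x` and through `y` gives `v ∨ bᵢ = v * d` and `w ∨ cᵢ = w * d` with the same `d`, since
both `x * v * d` and `y * w * d` are the unique lcm of `x ∨ y` and `aᵢ`. This `d` is the common
`i`-th entry; the `(i-1)`-st entries agree because `aᵢ x' v' = x v d = y w d = aᵢ y' w'`, and the
`(i+1)`-st because `x ∨ y` left-divides `aᵢ₊₁`.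
-/

theorem IsGcdMon.isLeftCancelMul (h : IsGcdMon M) : IsLeftCancelMul M :=
  ⟨fun a _ _ hbc => h.mul_left_cancel a _ _ hbc⟩

theorem IsGcdMon.eq_one_of_mul_eq_one_left (h : IsGcdMon M) {s t : M} (hst : s * t = 1) :
    s = 1 :=
  h.unit_eq_one s
    ⟨⟨s, t, hst, h.mul_left_cancel s _ _ (by rw [← mul_assoc, hst, one_mul, mul_one])⟩, rfl⟩

theorem IsGcdMon.eq_one_of_mul_eq_one_right (h : IsGcdMon M) {s t : M} (hst : s * t = 1) :
    t = 1 := by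
  rwa [h.eq_one_of_mul_eq_one_left hst, one_mul] at hst

theorem IsGcdMon.isRightLcm_unique (h : IsGcdMon M) {a b m m' : M}
    (hm : IsRightLcm a b m) (hm' : IsRightLcm a b m') : m = m' := by
  obtain ⟨s, hs⟩ := hm.2.2 m' hm'.1 hm'.2.1
  obtain ⟨t, ht⟩ := hm'.2.2 m hm.1 hm.2.1
  have hst : s * t = 1 := h.mul_left_cancel m _ _ (by rw [← mul_assoc, hs, ht, mul_one])
  rw [← hs, h.eq_one_of_mul_eq_one_left hst, mul_one]

/-- If `a * a' = b * b'` and `d` is a right gcd of `a'` and `b'`, with `a' = u * d` and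
`b' = v * d`, then `a * u = b * v` is a right lcm of `a` and `b`. -/
theorem IsGcdMon.exists_isRightLcm_s14 (h : IsGcdMon M) {a b : M} (hab : CommonRightMul a b) :
    ∃ l, IsRightLcm a b l := by
  obtain ⟨m, ⟨a', ha⟩, ⟨b', hb⟩⟩ := hab
  obtain ⟨d, ⟨u, hu⟩, ⟨v, hv⟩, hd⟩ := h.exists_rightGcd a' b'
  have hbv : b * v = a * u :=
    h.mul_right_cancel d _ _ (by rw [mul_assoc, mul_assoc, hu, hv, ha, hb])
  refine ⟨a * u, ⟨u, rfl⟩, ⟨v, hbv⟩, ?_⟩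
  rintro n ⟨na, hna⟩ ⟨nb, hnb⟩
  obtain ⟨g, ⟨t, hgt⟩, hgn, hg⟩ := h.exists_leftGcd (a * u) n
  obtain ⟨ga, hga⟩ := hg a ⟨u, rfl⟩ ⟨na, hna⟩
  obtain ⟨gb, hgb⟩ := hg b ⟨v, hbv⟩ ⟨nb, hnb⟩
  have hga' : ga * (t * d) = a' := by
    rw [← mul_assoc, h.mul_left_cancel a (ga * t) u (by rw [← mul_assoc, hga, hgt]), hu]
  have hgb' : gb * (t * d) = b' := by
    rw [← mul_assoc, h.mul_left_cancel b (gb * t) v (by rw [← mul_assoc, hgb, hgt, hbv]), hv]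
  -- `t * d` is a common right divisor of `a'` and `b'`, so `t` is invertible
  obtain ⟨k, hk⟩ := hd (t * d) ⟨ga, hga'⟩ ⟨gb, hgb'⟩
  have hkt : k * t = 1 := h.mul_right_cancel d _ _ (by rw [one_mul, mul_assoc, hk])
  rw [← hgt, h.eq_one_of_mul_eq_one_right hkt, mul_one]
  exact hgn

section LeftCancel

variable [IsLeftCancelMul M]

theorem commonRightMul_of_isRightLcm {x a b v : M} (hxa : IsRightLcm x a (x * b))
    (hm : CommonRightMul (x * v) a) : CommonRightMul v b := by
  obtain ⟨m, ⟨t, ht⟩, ham⟩ := hm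
  obtain ⟨t', ht'⟩ := hxa.2.2 m ⟨v * t, by rw [← mul_assoc, ht]⟩ ham
  exact ⟨v * t, ⟨t, rfl⟩, ⟨t', mul_left_cancel (by rw [← mul_assoc, ht', ← mul_assoc, ht])⟩⟩

theorem isRightLcm_mul {x a b v d : M} (hxa : IsRightLcm x a (x * b))
    (hvb : IsRightLcm v b (v * d)) : IsRightLcm (x * v) a (x * v * d) := by
  obtain ⟨x', hx'⟩ := hxa.2.1
  obtain ⟨v', hv'⟩ := hvb.2.1
  refine ⟨⟨d, rfl⟩, ⟨x' * v', by rw [← mul_assoc, hx', mul_assoc, hv', mul_assoc]⟩, ?_⟩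
  rintro n ⟨n₁, hn₁⟩ han
  obtain ⟨n₂, hn₂⟩ := hxa.2.2 n ⟨v * n₁, by rw [← mul_assoc, hn₁]⟩ han
  obtain ⟨n₃, hn₃⟩ := hvb.2.2 (b * n₂)
    ⟨n₁, mul_left_cancel (by rw [← mul_assoc, hn₁, ← mul_assoc, hn₂])⟩ ⟨n₂, rfl⟩
  exact ⟨n₃, by rw [← hn₂, mul_assoc x b, ← hn₃]; simp only [mul_assoc]⟩

end LeftCancel

theorem IsGcdMon.exists_isRightLcm_mul (h : IsGcdMon M) {x a b v : M}
    (hxa : IsRightLcm x a (x * b)) (hm : CommonRightMul (x * v) a) :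
    ∃ d, IsRightLcm v b (v * d) ∧ IsRightLcm (x * v) a (x * v * d) := by
  have := h.isLeftCancelMul
  obtain ⟨l, hl⟩ := h.exists_isRightLcm_s14 (commonRightMul_of_isRightLcm hxa hm)
  obtain ⟨d, rfl⟩ := hl.1
  exact ⟨d, hl, isRightLcm_mul hxa hl⟩

theorem reduce_iff_of_even {i : ℕ} (hi : i % 2 = 0) {x : M} {a b : List M} :
    Reduce i x a b ↔ 2 ≤ i ∧ ∃ (p s : List M) (am ai ap bi bp x' : M),
      p.length = i - 2 ∧
      a = p ++ am :: ai :: ap :: s ∧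
      b = p ++ (am * x') :: bi :: bp :: s ∧
      IsRightLcm x ai (x * bi) ∧ x * bi = ai * x' ∧ x * bp = ap := by
  constructor
  · rintro (⟨rfl, -⟩ | ⟨hi2, -, hab⟩ | ⟨-, hodd, -⟩)
    · omega
    · exact ⟨hi2, hab⟩
    · omega
  · exact fun ⟨hi2, hab⟩ => Or.inr (Or.inl ⟨hi2, hi, hab⟩)

/-- same-level confluence when `a_i`, `x`, `y` have a common
right multiple. -/
theorem stmt_14 {M : Type*} [Monoid M] (h : IsGcdMon M) {i : ℕ}
    (hi : i % 2 = 0) {x y v w : M} {a b c : List M}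
    (h1 : Reduce i x a b) (h2 : Reduce i y a c)
    (hm : ∃ m, LeftDvd x m ∧ LeftDvd y m ∧ LeftDvd (a.getD (i - 1) 1) m)
    (hv : IsRightLcm x y (x * v)) (hw : x * v = y * w) :
    ∃ d, Reduce i v b d ∧ Reduce i w c d := by
  have := h.isLeftCancelMul
  obtain ⟨hi2, p, s, am, ai, ap, bi, bp, x', hp, ha, hb, hxai, hx', hbp⟩ :=
    (reduce_iff_of_even hi).1 h1
  obtain ⟨-, q, s', am', ai', ap', ci, cp, y', hq, ha', hc, hyai, hy', hcp⟩ :=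
    (reduce_iff_of_even hi).1 h2
  obtain ⟨rfl, hentries⟩ := List.append_inj (ha.symm.trans ha') (hp.trans hq.symm)
  simp only [List.cons.injEq] at hentries
  obtain ⟨rfl, rfl, rfl, rfl⟩ := hentries
  have hai : a.getD (i - 1) 1 = ai := by
    rw [ha, List.getD_append_right _ _ _ _ (by omega), show i - 1 - p.length = 1 by omega]
    rfl
  obtain ⟨m, hxm, hym, haim⟩ := hm
  have hxv : CommonRightMul (x * v) ai := ⟨m, hv.2.2 m hxm hym, hai ▸ haim⟩
  obtain ⟨d, hvbi, hxvai⟩ := h.exists_isRightLcm_mul hxai hxv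
  obtain ⟨e, hwci, hywai⟩ := h.exists_isRightLcm_mul hyai (hw ▸ hxv)
  obtain rfl : d = e := mul_left_cancel (h.isRightLcm_unique hxvai (hw ▸ hywai))
  obtain ⟨v', hv'⟩ := hvbi.2.1
  obtain ⟨w', hw'⟩ := hwci.2.1
  have hx'v' : x' * v' = y' * w' := mul_left_cancel (a := ai) <| by
    rw [← mul_assoc, ← mul_assoc, ← hx', ← hy', mul_assoc, mul_assoc, hv', hw', ← mul_assoc,
      ← mul_assoc, hw]
  obtain ⟨dp, hdp⟩ := hv.2.2 ap ⟨bp, hbp⟩ ⟨cp, hcp⟩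
  refine ⟨p ++ (am * x' * v') :: d :: dp :: s,
    (reduce_iff_of_even hi).2
      ⟨hi2, p, s, am * x', bi, bp, d, dp, v', hp, hb, rfl, hvbi, hv'.symm, ?_⟩,
    (reduce_iff_of_even hi).2
      ⟨hi2, p, s, am * y', ci, cp, d, dp, w', hp, hc, ?_, hwci, hw'.symm, ?_⟩⟩
  · exact mul_left_cancel (by rw [← mul_assoc, hdp, hbp])
  · rw [mul_assoc, mul_assoc, hx'v']
  · exact mul_left_cancel (by rw [← mul_assoc, ← hw, hdp, hcp])

end MFR
end
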